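/- arXiv:1110.6198 — 2 statements merged into one kernel-verified Lean document; each statement's English description precedes it below -/
import Mathlib

section
/- Let G be a locally compact Hausdorff groupoid with s : G → G⁰ a local homeomorphism. Fix α ∈ G with r(α)·G·s(α) = {α} (α is the unique arrow from s(α) to r(α)), and let V be a precompact neighbourhood of α. Then there exist neighbourhoods X of r(α) and Y of s(α) in G⁰ such that XVY = {γ ∈ V : r(γ) ∈ X, s(γ) ∈ Y} is a precompact open bisection. -/
open scoped BigOperators

structure EtaleGroupoid (G : Type*) [TopologicalSpace G] where
  r : G → G
  s : G → G
  mul : G → G → G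
  inv : G → G
  mul_assoc' : ∀ a b c, s a = r b → s b = r c → mul (mul a b) c = mul a (mul b c)
  r_mul : ∀ a b, s a = r b → r (mul a b) = r a
  s_mul : ∀ a b, s a = r b → s (mul a b) = s b
  unit_mul : ∀ a, mul (r a) a = a
  mul_unit : ∀ a, mul a (s a) = a
  inv_inv : ∀ a, inv (inv a) = a
  r_inv : ∀ a, r (inv a) = s a
  s_inv : ∀ a, s (inv a) = r a
  mul_inv : ∀ a, mul a (inv a) = r a
  inv_mul : ∀ a, mul (inv a) a = s a
  continuous_r : Continuous r
  continuous_s : Continuous s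
  continuous_inv : Continuous inv
  continuous_mul : ContinuousOn (fun p : G × G => mul p.1 p.2) {p : G × G | s p.1 = r p.2}

namespace EtaleGroupoid

variable {G : Type*} [TopologicalSpace G] (g : EtaleGroupoid G)

/-- The unit space `G⁰`. -/
def unitSpace : Set G := Set.range g.r

/-- A bisection: a subset on which both `r` and `s` are injective. -/
def IsBisection (U : Set G) : Prop := Set.InjOn g.r U ∧ Set.InjOn g.s U

/-- The set-product `UV` of two subsets of `G`. -/
def setMul (U V : Set G) : Set G :=
  {x | ∃ a ∈ U, ∃ b ∈ V, g.s a = g.r b ∧ x = g.mul a b}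

/-- The source map is a local homeomorphism (onto its open image). -/
def SourceEtale : Prop :=
  ∀ a : G, ∃ U : Set G, IsOpen U ∧ a ∈ U ∧ Set.InjOn g.s U ∧
    ∀ V : Set G, V ⊆ U → IsOpen V → IsOpen (g.s '' V)

/-- The unit space is totally disconnected: it has a basis of compact open sets. -/
def UnitBasis : Prop :=
  ∀ u ∈ g.unitSpace, ∀ V : Set G, IsOpen V → u ∈ V →
    ∃ W : Set G, IsCompact W ∧ IsOpen W ∧ u ∈ W ∧ W ⊆ V ∧ W ⊆ g.unitSpace

/-- Convolution of complex functions on `G`. -/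
noncomputable def conv (f h : G → ℂ) : G → ℂ :=
  fun γ => ∑ᶠ α ∈ {α : G | g.r α = g.r γ}, f α * h (g.mul (g.inv α) γ)

/-- The involution `f*(γ) = conj (f (γ⁻¹))`. -/
noncomputable def star' (f : G → ℂ) : G → ℂ := fun γ => (starRingEnd ℂ) (f (g.inv γ))

/-- Indicator function of a set. -/
noncomputable def ind (U : Set G) : G → ℂ := Set.indicator U 1

/-- `c : G → Γ` is a cocycle. -/
def IsCocycle {Γ : Type*} [Group Γ] (c : G → Γ) : Prop :=
  ∀ a b, g.s a = g.r b → c (g.mul a b) = c a * c b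

/-- The `n`-graded compact open bisections. -/
def BcoGr {Γ : Type*} (c : G → Γ) (n : Γ) : Set (Set G) :=
  {U | IsCompact U ∧ IsOpen U ∧ g.IsBisection U ∧ ∀ x ∈ U, c x = n}

/-- All graded compact open bisections. -/
def Bco {Γ : Type*} (c : G → Γ) : Set (Set G) := ⋃ n, g.BcoGr c n

/-- `A(G)`: the locally constant, compactly supported complex functions, as a
submodule of `G → ℂ`. -/
noncomputable def AG : Submodule ℂ (G → ℂ) where
  carrier := {f | IsLocallyConstant f ∧ HasCompactSupport f}
  add_mem' := by
    rintro f h ⟨hf1, hf2⟩ ⟨hh1, hh2⟩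
    exact ⟨hf1.comp₂ hh1 (· + ·), hf2.add hh2⟩
  zero_mem' := ⟨IsLocallyConstant.const 0, by
    simp [HasCompactSupport, tsupport]⟩
  smul_mem' := by
    rintro a f ⟨hf1, hf2⟩
    constructor
    · have h := hf1.comp (fun z : ℂ => a * z)
      have : a • f = (fun z : ℂ => a * z) ∘ f := by
        funext x; simp [Function.comp, smul_eq_mul]
      rwa [this]
    · exact hf2.mono fun x hx => by
        have h : a * f x ≠ 0 := hx
        exact fun h0 => h (by simp [h0])

/-- The I-norm on `C_c(G)`. -/
noncomputable def Inorm (f : G → ℂ) : ℝ :=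
  max (⨆ u ∈ g.unitSpace, ∑ᶠ α ∈ {α : G | g.r α = u}, ‖f α‖)
      (⨆ u ∈ g.unitSpace, ∑ᶠ α ∈ {α : G | g.s α = u}, ‖f α‖)

/-- A representation of the graded compact open bisections in a complex algebra. -/
structure IsRep {Γ : Type*} {B : Type*} [Ring B] [Algebra ℂ B]
    (c : G → Γ) (t : Set G → B) : Prop where
  map_empty : t ∅ = 0
  map_mul : ∀ U V, U ∈ g.Bco c → V ∈ g.Bco c → t U * t V = t (g.setMul U V)
  map_union : ∀ n U V, U ∈ g.BcoGr c n → V ∈ g.BcoGr c n → Disjoint U V →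
    g.IsBisection (U ∪ V) → t U + t V = t (U ∪ V)

end EtaleGroupoid


/-
The map `γ ↦ (r γ, s γ)` is continuous into a Hausdorff space, so its image of the compact set
`closure V \ U`, where `U` is an open bisection around `α`, is closed. Since `α` is the only arrow
over `(r α, s α)`, this point lies outside that image, and a product neighbourhood `X × Y` of it
avoiding the image forces `XVY ⊆ U`.
-/

theorem exists_isOpen_preimage_inter_subset {X Y : Type*} [TopologicalSpace X]
    [TopologicalSpace Y] [T2Space Y] {f : X → Y} (hf : Continuous f) {U V : Set X}
    (hU : IsOpen U) (hV : IsCompact (closure V)) {y : Y} (hy : f ⁻¹' {y} ⊆ U) :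
    ∃ N : Set Y, IsOpen N ∧ y ∈ N ∧ f ⁻¹' N ∩ V ⊆ U := by
  have hK : IsClosed (f '' (closure V \ U)) :=
    ((hV.diff hU).image hf).isClosed
  refine ⟨(f '' (closure V \ U))ᶜ, hK.isOpen_compl, ?_, ?_⟩
  · rintro ⟨x, hx, rfl⟩
    exact hx.2 (hy rfl)
  · rintro x ⟨hxN, hxV⟩
    by_contra hxU
    exact hxN ⟨x, ⟨subset_closure hxV, hxU⟩, rfl⟩

namespace EtaleGroupoid

variable {G : Type*} [TopologicalSpace G] (g : EtaleGroupoid G)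

theorem s_mem_unitSpace (a : G) : g.s a ∈ g.unitSpace := ⟨g.inv a, g.r_inv a⟩

theorem isOpen_unitSpace (hs : g.SourceEtale) : IsOpen g.unitSpace := by
  refine isOpen_iff_forall_mem_open.2 ?_
  rintro _ ⟨a, rfl⟩
  obtain ⟨U, hUo, haU, -, himg⟩ := hs (g.inv a)
  exact ⟨g.s '' U, Set.image_subset_iff.2 fun b _ => g.s_mem_unitSpace b,
    himg U subset_rfl hUo, ⟨g.inv a, haU, g.s_inv a⟩⟩

theorem injOn_r_preimage_inv {U : Set G} (hU : Set.InjOn g.s U) :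
    Set.InjOn g.r (g.inv ⁻¹' U) := by
  intro a ha b hb hab
  have h : g.inv a = g.inv b := hU ha hb (by rw [g.s_inv, g.s_inv, hab])
  simpa only [g.inv_inv] using congrArg g.inv h

variable {g} in
theorem IsBisection.mono {U W : Set G} (hU : g.IsBisection U) (hWU : W ⊆ U) :
    g.IsBisection W :=
  ⟨hU.1.mono hWU, hU.2.mono hWU⟩

theorem exists_isOpen_isBisection (hs : g.SourceEtale) (a : G) :
    ∃ U : Set G, IsOpen U ∧ a ∈ U ∧ g.IsBisection U := by
  obtain ⟨U₁, hU₁o, haU₁, hs₁, -⟩ := hs a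
  obtain ⟨U₂, hU₂o, haU₂, hs₂, -⟩ := hs (g.inv a)
  exact ⟨U₁ ∩ g.inv ⁻¹' U₂, hU₁o.inter (hU₂o.preimage g.continuous_inv), ⟨haU₁, haU₂⟩,
    (g.injOn_r_preimage_inv hs₂).mono Set.inter_subset_right, hs₁.mono Set.inter_subset_left⟩

end EtaleGroupoid

theorem exists_bisection_neighbourhood_general {G : Type*} [TopologicalSpace G] [T2Space G]
    (g : EtaleGroupoid G) (hs : g.SourceEtale)
    (α : G) (hiso : ∀ γ : G, g.r γ = g.r α → g.s γ = g.s α → γ = α)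
    (V : Set G) (hVo : IsOpen V) (hVc : IsCompact (closure V)) :
    ∃ X Y : Set G, IsOpen X ∧ g.r α ∈ X ∧ X ⊆ g.unitSpace ∧
      IsOpen Y ∧ g.s α ∈ Y ∧ Y ⊆ g.unitSpace ∧
      IsOpen (g.r ⁻¹' X ∩ V ∩ g.s ⁻¹' Y) ∧
      IsCompact (closure (g.r ⁻¹' X ∩ V ∩ g.s ⁻¹' Y)) ∧
      g.IsBisection (g.r ⁻¹' X ∩ V ∩ g.s ⁻¹' Y) := by
  obtain ⟨U, hUo, hαU, hU⟩ := g.exists_isOpen_isBisection hs α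
  have hfibre : (fun γ => (g.r γ, g.s γ)) ⁻¹' {(g.r α, g.s α)} ⊆ U := fun γ hγ => by
    obtain ⟨hγr, hγs⟩ := Prod.mk.inj hγ
    rwa [hiso γ hγr hγs]
  obtain ⟨N, hNo, hαN, hNU⟩ := exists_isOpen_preimage_inter_subset
    (g.continuous_r.prodMk g.continuous_s) hUo hVc hfibre
  obtain ⟨X, Y, hXo, hYo, hαX, hαY, hXY⟩ := isOpen_prod_iff.1 hNo _ _ hαN
  have hG₀ := g.isOpen_unitSpace hs
  refine ⟨X ∩ g.unitSpace, Y ∩ g.unitSpace, hXo.inter hG₀, ⟨hαX, α, rfl⟩,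
    Set.inter_subset_right, hYo.inter hG₀, ⟨hαY, g.s_mem_unitSpace α⟩, Set.inter_subset_right,
    (((hXo.inter hG₀).preimage g.continuous_r).inter hVo).inter
      ((hYo.inter hG₀).preimage g.continuous_s),
    hVc.of_isClosed_subset isClosed_closure (closure_mono fun γ hγ => hγ.1.2), hU.mono ?_⟩
  rintro γ ⟨⟨hγX, hγV⟩, hγY⟩
  exact hNU ⟨hXY ⟨hγX.1, hγY.1⟩, hγV⟩

/-- If `α` is the unique arrow from `s(α)` to `r(α)` and `V` is a precompact open
neighbourhood of `α`, then there are neighbourhoods `X` of `r(α)` and `Y` of `s(α)`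
in the unit space such that `XVY` is a precompact open bisection. -/
theorem exists_bisection_neighbourhood {G : Type*} [TopologicalSpace G] [T2Space G]
    [LocallyCompactSpace G] (g : EtaleGroupoid G) (hs : g.SourceEtale)
    (α : G) (hiso : ∀ γ : G, g.r γ = g.r α → g.s γ = g.s α → γ = α)
    (V : Set G) (hVo : IsOpen V) (hVα : α ∈ V) (hVc : IsCompact (closure V)) :
    ∃ X Y : Set G, IsOpen X ∧ g.r α ∈ X ∧ X ⊆ g.unitSpace ∧
      IsOpen Y ∧ g.s α ∈ Y ∧ Y ⊆ g.unitSpace ∧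
      IsOpen (g.r ⁻¹' X ∩ V ∩ g.s ⁻¹' Y) ∧
      IsCompact (closure (g.r ⁻¹' X ∩ V ∩ g.s ⁻¹' Y)) ∧
      g.IsBisection (g.r ⁻¹' X ∩ V ∩ g.s ⁻¹' Y) :=
  exists_bisection_neighbourhood_general g hs α hiso V hVo hVc
end

section
/- Let G be as above, k ∈ Γ, and let g = Σ_{V∈K} a_V 1_V be a nonzero element of A_k, where K is a finite set of mutually disjoint k-graded compact open bisections. Then g* * g = Σ_{V,W∈K} conj(a_V) a_W 1_{V⁻¹W} is a nonzero element of A_e, where e is the identity of Γ. -/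
open scoped BigOperators

/-!
For fixed `γ`, the term `α ↦ 1_V(α⁻¹) 1_W(α⁻¹γ)` of the convolution sum over `r⁻¹(r γ)` is
supported on at most one point, because `s` is injective on `V`; it is `1` exactly when
`γ ∈ V⁻¹W`. Expanding `f* ∗ f` bilinearly (legitimate since all sums over `r`-fibres are finite)
gives the formula. At the unit `s γ` the convolution is `Σ |f β|²` over `s⁻¹(s γ)`, a finite sum
of nonnegative terms containing `|f γ|²`, so it is nonzero as soon as `f γ ≠ 0`. Since `c` is a
cocycle, `f*` lives in degree `k⁻¹` and `f* ∗ f` in degree `k⁻¹ k = 1`.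
-/

lemma finsum_mem_pos {α M : Type*} [AddCommMonoid M] [PartialOrder M] [IsOrderedCancelAddMonoid M]
    {s : Set α} {f : α → M} (hf : (s ∩ Function.support f).Finite) (h0 : ∀ x ∈ s, 0 ≤ f x)
    {a : α} (ha : a ∈ s) (hpos : 0 < f a) : 0 < ∑ᶠ x ∈ s, f x := by
  rw [finsum_mem_eq_sum _ hf]
  exact Finset.sum_pos' (fun x hx => h0 x (hf.mem_toFinset.mp hx).1)
    ⟨a, hf.mem_toFinset.mpr ⟨ha, hpos.ne'⟩, hpos⟩

namespace EtaleGroupoid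

open Function Set

section

variable {G : Type*}

lemma support_ind (U : Set G) : support (ind U) = U := by
  ext; simp [ind]

lemma support_sum_smul_ind_subset (K : Finset (Set G)) (a : Set G → ℂ) :
    support (∑ V ∈ K, a V • ind V) ⊆ ⋃ V ∈ K, V := by
  rw [Finset.sum_fn]
  exact (Finset.support_sum _ _).trans <| biUnion_mono subset_rfl fun V _ =>
    (support_smul_subset_right _ _).trans (support_ind _).subset

end

variable {G : Type*} [TopologicalSpace G] (g : EtaleGroupoid G)

lemma r_r (a : G) : g.r (g.r a) = g.r a := by
  simpa only [g.mul_inv] using g.r_mul a (g.inv a) (g.r_inv a).symm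

lemma s_r (a : G) : g.s (g.r a) = g.r a := by
  simpa only [g.mul_inv, g.s_inv] using g.s_mul a (g.inv a) (g.r_inv a).symm

lemma r_s (a : G) : g.r (g.s a) = g.s a := by
  simpa only [g.r_inv] using g.r_r (g.inv a)

lemma inv_injective : Injective g.inv :=
  LeftInverse.injective g.inv_inv

lemma r_inv_mul {α γ : G} (h : g.r α = g.r γ) : g.r (g.mul (g.inv α) γ) = g.s α := by
  rw [g.r_mul _ _ (by rw [g.s_inv, h]), g.r_inv]

lemma mul_inv_cancel_left {α γ : G} (h : g.r α = g.r γ) :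
    g.mul α (g.mul (g.inv α) γ) = γ := by
  rw [← g.mul_assoc' _ _ _ (g.r_inv α).symm (by rw [g.s_inv, h]), g.mul_inv, h, g.unit_mul]

section Cocycle

variable {g} {Γ : Type*} [Group Γ] {c : G → Γ}

lemma IsCocycle.map_r (hc : g.IsCocycle c) (x : G) : c (g.r x) = 1 := by
  have h := hc (g.r x) x (g.s_r x)
  rw [g.unit_mul] at h
  exact mul_eq_right.mp h.symm

lemma IsCocycle.map_inv (hc : g.IsCocycle c) (x : G) : c (g.inv x) = (c x)⁻¹ := by
  have h := hc x (g.inv x) (g.r_inv x).symm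
  rw [g.mul_inv, hc.map_r] at h
  exact eq_inv_of_mul_eq_one_right h.symm

lemma support_star'_subset (hc : g.IsCocycle c) {f : G → ℂ} {k : Γ}
    (hf : support f ⊆ c ⁻¹' {k}) : support (g.star' f) ⊆ c ⁻¹' {k⁻¹} := by
  intro γ hγ
  have hk : c (g.inv γ) = k := hf fun h0 => hγ (by simp [star', h0])
  rw [mem_preimage, mem_singleton_iff, ← hk, hc.map_inv, _root_.inv_inv]

lemma support_conv_subset (hc : g.IsCocycle c) {f h : G → ℂ} {k l : Γ}
    (hf : support f ⊆ c ⁻¹' {k}) (hh : support h ⊆ c ⁻¹' {l}) :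
    support (g.conv f h) ⊆ c ⁻¹' {k * l} := by
  intro γ hγ
  obtain ⟨α, hα, hne⟩ := exists_ne_zero_of_finsum_mem_ne_zero hγ
  have hsplit := hc α (g.mul (g.inv α) γ) (g.r_inv_mul hα).symm
  rw [g.mul_inv_cancel_left hα] at hsplit
  rw [mem_preimage, mem_singleton_iff, hsplit, hf (left_ne_zero_of_mul hne),
    hh (right_ne_zero_of_mul hne)]

end Cocycle

lemma star'_sum_smul {ι : Type*} (s : Finset ι) (a : ι → ℂ) (f : ι → G → ℂ) :
    g.star' (∑ i ∈ s, a i • f i) = ∑ i ∈ s, starRingEnd ℂ (a i) • g.star' (f i) := by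
  funext γ
  simp [star', Finset.sum_apply]

lemma support_star' (f : G → ℂ) : support (g.star' f) = g.inv ⁻¹' support f := by
  ext; simp [star']

/-- `conv` is a `finsum`, which is junk (`0`) on infinite supports; for a left factor with this
property every convolution sum is a genuine finite sum. -/
def RFibreFinite (f : G → ℂ) : Prop :=
  ∀ u, ({α | g.r α = u} ∩ support f).Finite

variable {g}

lemma RFibreFinite.mono {f f' : G → ℂ} (hf : g.RFibreFinite f) (h : support f' ⊆ support f) :
    g.RFibreFinite f' :=
  fun u => (hf u).subset (inter_subset_inter_right _ h)

lemma RFibreFinite.finset_sum {ι : Type*} {s : Finset ι} {f : ι → G → ℂ}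
    (hf : ∀ i ∈ s, g.RFibreFinite (f i)) : g.RFibreFinite (∑ i ∈ s, f i) := by
  intro u
  refine (s.finite_toSet.biUnion fun i hi => hf i hi u).subset ?_
  rw [← inter_iUnion₂, Finset.sum_fn]
  exact inter_subset_inter_right _ (Finset.support_sum _ _)

lemma RFibreFinite.const_smul {f : G → ℂ} (hf : g.RFibreFinite f) (a : ℂ) :
    g.RFibreFinite (a • f) :=
  hf.mono (support_const_smul_subset a f)

variable (g)

lemma rFibreFinite_star'_ind {V : Set G} (hV : InjOn g.s V) :
    g.RFibreFinite (g.star' (ind V)) := by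
  intro u
  rw [support_star', support_ind]
  refine Subsingleton.finite fun x ⟨hxu, hxV⟩ y ⟨hyu, hyV⟩ => g.inv_injective (hV hxV hyV ?_)
  rw [g.s_inv, g.s_inv]
  exact Eq.trans hxu (Eq.symm hyu)

lemma conv_apply_eq_sum {f h : G → ℂ} {γ : G} {F : Finset G}
    (hF : ↑F ⊆ {α | g.r α = g.r γ}) (hsupp : {α | g.r α = g.r γ} ∩ support f ⊆ F) :
    g.conv f h γ = ∑ α ∈ F, f α * h (g.mul (g.inv α) γ) :=
  finsum_mem_eq_sum_of_subset _
    ((inter_subset_inter_right _ (support_mul_subset_left _ _)).trans hsupp) hF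

lemma conv_sum_smul_sum_smul {ι κ : Type*} (s : Finset ι) (t : Finset κ) (a : ι → ℂ)
    (b : κ → ℂ) (f : ι → G → ℂ) (h : κ → G → ℂ) (hf : ∀ i ∈ s, g.RFibreFinite (f i)) :
    g.conv (∑ i ∈ s, a i • f i) (∑ j ∈ t, b j • h j)
      = ∑ i ∈ s, ∑ j ∈ t, (a i * b j) • g.conv (f i) (h j) := by
  funext γ
  have hfin : ({α | g.r α = g.r γ} ∩ ⋃ i ∈ s, support (f i)).Finite := by
    rw [inter_iUnion₂]
    exact s.finite_toSet.biUnion fun i hi => hf i hi _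
  have hconv : ∀ φ ψ : G → ℂ, support φ ⊆ ⋃ i ∈ s, support (f i) →
      g.conv φ ψ γ = ∑ α ∈ hfin.toFinset, φ α * ψ (g.mul (g.inv α) γ) := fun φ ψ hφ =>
    g.conv_apply_eq_sum (fun α hα => (hfin.mem_toFinset.mp hα).1)
      fun α ⟨hα, hφα⟩ => Finset.mem_coe.mpr (hfin.mem_toFinset.mpr ⟨hα, hφ hφα⟩)
  have hsupp : support (∑ i ∈ s, a i • f i) ⊆ ⋃ i ∈ s, support (f i) := by
    rw [Finset.sum_fn]
    exact (Finset.support_sum _ _).trans <|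
      biUnion_mono subset_rfl fun i _ => support_const_smul_subset _ _
  rw [hconv _ _ hsupp]
  simp only [Finset.sum_apply, Pi.smul_apply, smul_eq_mul]
  rw [Finset.sum_congr rfl fun i hi => Finset.sum_congr rfl fun j _ => by
    rw [hconv (f i) (h j) (subset_iUnion₂_of_subset i hi subset_rfl)]]
  simp only [Finset.sum_mul, Finset.mul_sum]
  rw [Finset.sum_comm, eq_comm, Finset.sum_comm]
  refine Finset.sum_congr rfl fun j _ => ?_
  rw [Finset.sum_comm]
  exact Finset.sum_congr rfl fun i _ => Finset.sum_congr rfl fun α _ => by ring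

lemma conv_star'_ind_ind {V W : Set G} (hV : InjOn g.s V) :
    g.conv (g.star' (ind V)) (ind W) = ind (g.setMul (g.inv '' V) W) := by
  funext γ
  set S := {α | g.r α = g.r γ}
  set T := {α | g.inv α ∈ V ∧ g.mul (g.inv α) γ ∈ W}
  have hterm : ∀ α, g.star' (ind V) α * ind W (g.mul (g.inv α) γ) = ind T α := by
    intro α
    by_cases h1 : g.inv α ∈ V <;> by_cases h2 : g.mul (g.inv α) γ ∈ W <;>
      simp [star', ind, T, h1, h2]
  have hsub : (S ∩ T).Subsingleton := fun x ⟨hxS, hxV, _⟩ y ⟨hyS, hyV, _⟩ =>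
    g.inv_injective <| hV hxV hyV <| by
      rw [g.s_inv, g.s_inv]
      exact Eq.trans hxS (Eq.symm hyS)
  have hne : (S ∩ T).Nonempty ↔ γ ∈ g.setMul (g.inv '' V) W := by
    constructor
    · rintro ⟨α, hαS, hαV, hαW⟩
      exact ⟨α, ⟨g.inv α, hαV, g.inv_inv α⟩, _, hαW, (g.r_inv_mul hαS).symm,
        (g.mul_inv_cancel_left hαS).symm⟩
    · rintro ⟨_, ⟨v, hv, rfl⟩, w, hw, hvw, rfl⟩
      have hrv : g.r v = g.r w := by rw [← g.s_inv]; exact hvw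
      refine ⟨g.inv v, ?_, ?_, ?_⟩
      · exact (g.r_mul _ _ hvw).symm
      · rwa [g.inv_inv]
      · rwa [g.inv_inv, g.mul_inv_cancel_left hrv]
  change ∑ᶠ α ∈ S, g.star' (ind V) α * ind W (g.mul (g.inv α) γ) = _
  simp only [hterm]
  rw [← finsum_mem_inter_support, support_ind]
  rcases hsub.eq_empty_or_singleton with h | ⟨α, h⟩
  · rw [h, finsum_mem_empty]
    exact (indicator_of_notMem (fun hγ => (hne.mpr hγ).ne_empty h) _).symm
  · have hα : α ∈ S ∩ T := h ▸ rfl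
    rw [h, finsum_mem_singleton]
    simp [ind, indicator_of_mem hα.2, indicator_of_mem (hne.mp ⟨α, hα⟩)]

lemma conv_star'_self_apply_s (f : G → ℂ) (γ : G) :
    g.conv (g.star' f) f (g.s γ)
      = ∑ᶠ α ∈ {α | g.r α = g.s γ}, star (f (g.inv α)) * f (g.inv α) := by
  change ∑ᶠ α ∈ {α | g.r α = g.r (g.s γ)}, _ = _
  rw [g.r_s]
  refine finsum_mem_congr rfl fun α hα => ?_
  rw [← (hα : g.r α = g.s γ), ← g.s_inv, g.mul_unit]
  rfl

open scoped ComplexOrder in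
lemma conv_star'_self_ne_zero {f : G → ℂ} (hf : g.RFibreFinite (g.star' f)) (hne : f ≠ 0) :
    g.conv (g.star' f) f ≠ 0 := by
  obtain ⟨γ, hγ⟩ := Function.ne_iff.mp hne
  refine Function.ne_iff.mpr ⟨g.s γ, ?_⟩
  rw [conv_star'_self_apply_s]
  refine (finsum_mem_pos ((hf (g.s γ)).subset (inter_subset_inter_right _
    (support_mul_subset_left _ _))) (fun α _ => star_mul_self_nonneg _) (g.r_inv γ) ?_).ne'
  rw [g.inv_inv]
  exact star_mul_self_pos (.of_ne_zero hγ)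

end EtaleGroupoid

theorem star_conv_nonzero_general {G : Type*} {Γ : Type*} [TopologicalSpace G] [Group Γ]
    (g : EtaleGroupoid G) (c : G → Γ) (hcoc : g.IsCocycle c) (k : Γ)
    (K : Finset (Set G)) (a : Set G → ℂ)
    (hK : ∀ V ∈ K, V ∈ g.BcoGr c k)
    (f : G → ℂ) (hf : f = ∑ V ∈ K, a V • EtaleGroupoid.ind V) (hne : f ≠ 0) :
    g.conv (g.star' f) f
      = ∑ V ∈ K, ∑ W ∈ K,
          ((starRingEnd ℂ) (a V) * a W) • EtaleGroupoid.ind (g.setMul (g.inv '' V) W) ∧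
    g.conv (g.star' f) f ≠ 0 ∧
    Function.support (g.conv (g.star' f) f) ⊆ c ⁻¹' {1} := by
  have hinj : ∀ V ∈ K, Set.InjOn g.s V := fun V hV => (hK V hV).2.2.1.2
  have hstar : g.star' f = ∑ V ∈ K, starRingEnd ℂ (a V) • g.star' (EtaleGroupoid.ind V) := by
    rw [hf, g.star'_sum_smul]
  have hgraded : Function.support f ⊆ c ⁻¹' {k} := hf ▸
    (EtaleGroupoid.support_sum_smul_ind_subset K a).trans
      (Set.iUnion₂_subset fun V hV x hx => (hK V hV).2.2.2 x hx)
  refine ⟨?_, g.conv_star'_self_ne_zero ?_ hne, ?_⟩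
  · rw [hstar, hf, g.conv_sum_smul_sum_smul _ _ _ _ _ _
      fun V hV => g.rFibreFinite_star'_ind (hinj V hV)]
    exact Finset.sum_congr rfl fun V hV => Finset.sum_congr rfl fun W _ => by
      rw [g.conv_star'_ind_ind (hinj V hV)]
  · exact hstar ▸ EtaleGroupoid.RFibreFinite.finset_sum fun V hV =>
      (g.rFibreFinite_star'_ind (hinj V hV)).const_smul _
  · exact inv_mul_cancel k ▸
      g.support_conv_subset hcoc (g.support_star'_subset hcoc hgraded) hgraded

/-- If `f = Σ_(V ∈ K) a_V 1_V` is a nonzero `k`-graded element of `A(G)`, with `K`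
a finite set of mutually disjoint `k`-graded compact open bisections, then
`f* * f = Σ_(V,W) conj(a_V) a_W 1_(V⁻¹W)` is a nonzero element of `A_e`. -/
theorem star_conv_nonzero {G : Type*} {Γ : Type*} [TopologicalSpace G] [T2Space G] [LocallyCompactSpace G]
    [Group Γ] [TopologicalSpace Γ] [DiscreteTopology Γ]
    (g : EtaleGroupoid G) (hs : g.SourceEtale) (hu : g.UnitBasis)
    (c : G → Γ) (hc : Continuous c) (hcoc : g.IsCocycle c) (k : Γ)
    (K : Finset (Set G)) (a : Set G → ℂ)
    (hK : ∀ V ∈ K, V ∈ g.BcoGr c k)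
    (hdisj : ∀ V ∈ K, ∀ W ∈ K, V ≠ W → Disjoint V W)
    (f : G → ℂ) (hf : f = ∑ V ∈ K, a V • EtaleGroupoid.ind V) (hne : f ≠ 0) :
    g.conv (g.star' f) f
      = ∑ V ∈ K, ∑ W ∈ K,
          ((starRingEnd ℂ) (a V) * a W) • EtaleGroupoid.ind (g.setMul (g.inv '' V) W) ∧
    g.conv (g.star' f) f ≠ 0 ∧
    Function.support (g.conv (g.star' f) f) ⊆ c ⁻¹' {1} :=
  star_conv_nonzero_general g c hcoc k K a hK f hf hne
end
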